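/- arXiv:1704.06586 — 6 statements merged into one kernel-verified Lean document; each statement's English description precedes it below -/
import Mathlib

section
/- Let k ≥ 2 be an integer and let u, v : ℕ → (0,∞) be sequences satisfying u_{m+1} = v_m·(1+u_m)^k and v_{m+1} = 1/u_m for all m ≥ 0. Then u_m → +∞ and v_m → 0 as m → ∞ (equivalently, log u_m → +∞ and log v_m → −∞). In particular every orbit of the generator of Γ_{L_k} on the positive X-space is divergent. -/
open Filter

/-!
Eliminating `v` gives `u (m+2) * u m = (1 + u (m+1)) ^ k ≥ u (m+1) * (1 + u (m+1))`, which says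
that the ratios `r m = u (m+1) / u m` satisfy `r (m+1) ≥ r m + 1 / u m`. So `r` is increasing.
If some `r M > 1`, then `u` grows geometrically from `M` on. Otherwise `u` is decreasing, hence
`u m ≤ u 0`, and `r m ≥ m / u 0` eventually exceeds `1`, a contradiction. Finally `v (m+1) = 1 / u m`.
-/

section RatioGrowth

variable {u : ℕ → ℝ}

lemma ratio_add_inv_le_ratio (hu : ∀ m, 0 < u m)
    (h : ∀ m, u (m + 1) * (1 + u (m + 1)) ≤ u (m + 2) * u m) (m : ℕ) :
    u (m + 1) / u m + 1 / u m ≤ u (m + 2) / u (m + 1) := by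
  rw [← add_div, div_le_div_iff₀ (hu m) (hu (m + 1))]
  linarith [h m]

lemma monotone_ratio (hu : ∀ m, 0 < u m)
    (h : ∀ m, u (m + 1) * (1 + u (m + 1)) ≤ u (m + 2) * u m) :
    Monotone fun m => u (m + 1) / u m :=
  monotone_nat_of_le_succ fun m => by
    linarith [ratio_add_inv_le_ratio hu h m, one_div_pos.2 (hu m)]

lemma tendsto_atTop_of_one_lt_ratio (hu : ∀ m, 0 < u m)
    (hmono : Monotone fun m => u (m + 1) / u m) {M : ℕ} (hM : 1 < u (M + 1) / u M) :
    Tendsto u atTop atTop := by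
  refine (tendsto_add_atTop_iff_nat M).1 (tendsto_atTop_of_geom_le (hu (0 + M)) hM fun n => ?_)
  calc u (M + 1) / u M * u (n + M)
      ≤ u (n + M + 1) / u (n + M) * u (n + M) :=
        mul_le_mul_of_nonneg_right (hmono (Nat.le_add_left M n)) (hu _).le
    _ = u (n + 1 + M) := by rw [div_mul_cancel₀ _ (hu _).ne', Nat.add_right_comm]

lemma exists_one_lt_ratio (hu : ∀ m, 0 < u m)
    (h : ∀ m, u (m + 1) * (1 + u (m + 1)) ≤ u (m + 2) * u m) :
    ∃ M, 1 < u (M + 1) / u M := by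
  by_contra! hle
  have hanti : Antitone u :=
    antitone_nat_of_succ_le fun m => (div_le_one (hu m)).1 (hle m)
  have hgrow : ∀ m : ℕ, m / u 0 ≤ u (m + 1) / u m := by
    intro m
    induction m with
    | zero => simpa using (div_pos (hu 1) (hu 0)).le
    | succ m ih =>
      calc ((m + 1 : ℕ) : ℝ) / u 0 = m / u 0 + 1 / u 0 := by push_cast; ring
        _ ≤ u (m + 1) / u m + 1 / u m :=
          add_le_add ih (one_div_le_one_div_of_le (hu m) (hanti (Nat.zero_le m)))
        _ ≤ u (m + 2) / u (m + 1) := ratio_add_inv_le_ratio hu h m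
  obtain ⟨m, hm⟩ := exists_nat_gt (u 0)
  exact (hle m).not_gt (((one_lt_div (hu 0)).2 hm).trans_le (hgrow m))

theorem tendsto_atTop_of_mul_one_add_le_mul (hu : ∀ m, 0 < u m)
    (h : ∀ m, u (m + 1) * (1 + u (m + 1)) ≤ u (m + 2) * u m) :
    Tendsto u atTop atTop :=
  let ⟨_, hM⟩ := exists_one_lt_ratio hu h
  tendsto_atTop_of_one_lt_ratio hu (monotone_ratio hu h) hM

end RatioGrowth

section LkOrbit

variable {k : ℕ} {u v : ℕ → ℝ}

lemma Lk_orbit_mul_eq (hu : ∀ m, 0 < u m)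
    (hrecu : ∀ m, u (m + 1) = v m * (1 + u m) ^ k)
    (hrecv : ∀ m, v (m + 1) = 1 / u m) (m : ℕ) :
    u (m + 2) * u m = (1 + u (m + 1)) ^ k := by
  rw [hrecu (m + 1), hrecv m]
  field_simp [(hu m).ne']

lemma Lk_orbit_mul_one_add_le (hk : 2 ≤ k) (hu : ∀ m, 0 < u m)
    (hrecu : ∀ m, u (m + 1) = v m * (1 + u m) ^ k)
    (hrecv : ∀ m, v (m + 1) = 1 / u m) (m : ℕ) :
    u (m + 1) * (1 + u (m + 1)) ≤ u (m + 2) * u m := by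
  rw [Lk_orbit_mul_eq hu hrecu hrecv]
  calc u (m + 1) * (1 + u (m + 1)) ≤ (1 + u (m + 1)) ^ 2 := by nlinarith [hu (m + 1)]
    _ ≤ (1 + u (m + 1)) ^ k := pow_le_pow_right₀ (by linarith [hu (m + 1)]) hk

end LkOrbit

theorem Lk_orbit_divergent_general (k : ℕ) (hk : 2 ≤ k) (u v : ℕ → ℝ)
    (hu : ∀ m, 0 < u m)
    (hrecu : ∀ m, u (m + 1) = v m * (1 + u m) ^ k)
    (hrecv : ∀ m, v (m + 1) = 1 / u m) :
    Filter.Tendsto u Filter.atTop Filter.atTop ∧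
    Filter.Tendsto v Filter.atTop (nhds 0) := by
  have hu_top : Tendsto u atTop atTop :=
    tendsto_atTop_of_mul_one_add_le_mul hu (Lk_orbit_mul_one_add_le hk hu hrecu hrecv)
  refine ⟨hu_top, (tendsto_add_atTop_iff_nat 1).1 ?_⟩
  simp only [hrecv, one_div]
  exact tendsto_inv_atTop_zero.comp hu_top

/-- For `k ≥ 2`, any positive sequences satisfying
`u_{m+1} = v_m (1+u_m)^k`, `v_{m+1} = 1/u_m` satisfy `u_m → +∞` and `v_m → 0`:
every orbit of the generator of `Γ_{L_k}` on the positive X-space is divergent. -/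
theorem Lk_orbit_divergent (k : ℕ) (hk : 2 ≤ k) (u v : ℕ → ℝ)
    (hu : ∀ m, 0 < u m) (hv : ∀ m, 0 < v m)
    (hrecu : ∀ m, u (m + 1) = v m * (1 + u m) ^ k)
    (hrecv : ∀ m, v (m + 1) = 1 / u m) :
    Filter.Tendsto u Filter.atTop Filter.atTop ∧
    Filter.Tendsto v Filter.atTop (nhds 0) :=
  Lk_orbit_divergent_general k hk u v hu hrecu hrecv
end

section
/- Let C > 0 be a real constant and let x : ℕ → ℝ be a sequence satisfying x_{n+2} = log(C + exp(2·x_{n+1})) − x_n for all n ≥ 0. Then, for arbitrary initial values x₀, x₁ ∈ ℝ, one has x_n → +∞ as n → ∞, and moreover x_{n+1}/x_n → 1. -/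
/-!
Writing `d n = x (n + 1) - x n`, the recurrence reads
`d (n + 1) = d n + log (1 + C e^{-2 x (n + 1)})`, so the increments `d n` increase. They cannot
all be nonpositive: `x` would then be bounded by `x 0`, each correction would be at least
`log (1 + C e^{-2 x 0}) > 0`, and `d` would tend to `+∞`. Hence `d n ≥ δ > 0` eventually and `x`
grows at least linearly. The corrections are then dominated by the geometrically decaying
`C e^{-2 x (n + 1)}`, so `d` converges, and `x (n + 1) / x n = 1 + d n / x n → 1`.
-/

open Filter Real Finset Topology

theorem tendsto_of_hasSum_sub_succ {E : Type*} [AddCommGroup E] [TopologicalSpace E]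
    [ContinuousAdd E] {f : ℕ → E} {s : E} (h : HasSum (fun n => f (n + 1) - f n) s) :
    Tendsto f atTop (𝓝 (f 0 + s)) := by
  have hf : f = fun n => f 0 + ∑ k ∈ range n, (f (k + 1) - f k) := by
    funext n
    rw [sum_range_sub]
    abel
  rw [hf]
  simpa only [add_zero, range_zero, sum_empty] using tendsto_const_nhds.add h.tendsto_sum_nat

theorem tendsto_atTop_of_eventually_le_sub_succ {f : ℕ → ℝ} {ε : ℝ} (hε : 0 < ε)
    (h : ∀ᶠ n in atTop, ε ≤ f (n + 1) - f n) : Tendsto f atTop atTop := by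
  obtain ⟨N, hN⟩ := eventually_atTop.mp h
  rw [← tendsto_add_atTop_iff_nat N]
  have hlinear : ∀ n : ℕ, f N + n * ε ≤ f (n + N) := by
    intro n
    have hsum : ∑ _k ∈ range n, ε ≤ ∑ k ∈ range n, (f (k + 1 + N) - f (k + N)) :=
      sum_le_sum fun k _ => by simpa only [add_right_comm] using hN (k + N) (by omega)
    rw [sum_range_sub (fun k => f (k + N)), sum_const, card_range, nsmul_eq_mul, zero_add] at hsum
    linarith
  exact tendsto_atTop_mono hlinear
    (tendsto_atTop_add_const_left _ _ (tendsto_natCast_atTop_atTop.atTop_mul_const hε))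

theorem summable_exp_neg_of_eventually_le_sub_succ {f : ℕ → ℝ} {δ : ℝ} (hδ : 0 < δ)
    (h : ∀ᶠ n in atTop, δ ≤ f (n + 1) - f n) : Summable fun n => exp (-f n) := by
  refine summable_of_ratio_norm_eventually_le (exp_lt_one_iff.mpr (neg_lt_zero.mpr hδ)) ?_
  filter_upwards [h] with n hn
  simp only [norm_eq_abs, abs_exp, ← exp_add]
  exact exp_le_exp.mpr (by linarith)

theorem tendsto_succ_div_self_of_tendsto_sub {f : ℕ → ℝ} {l : ℝ} (hf : Tendsto f atTop atTop)
    (hd : Tendsto (fun n => f (n + 1) - f n) atTop (𝓝 l)) :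
    Tendsto (fun n => f (n + 1) / f n) atTop (𝓝 1) := by
  have h : Tendsto (fun n => 1 + (f (n + 1) - f n) / f n) atTop (𝓝 (1 + 0)) :=
    tendsto_const_nhds.add (hd.div_atTop hf)
  rw [add_zero] at h
  refine h.congr' ?_
  filter_upwards [hf.eventually_gt_atTop 0] with n hn
  field_simp
  ring

theorem log_add_exp_eq {C : ℝ} (hC : 0 ≤ C) (a : ℝ) :
    log (C + exp a) = a + log (1 + C * exp (-a)) := by
  have h : C + exp a = exp a * (1 + C * exp (-a)) := by
    rw [mul_add, mul_one, mul_left_comm, ← exp_add, add_neg_cancel, exp_zero, mul_one, add_comm]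
  rw [h, log_mul (exp_ne_zero a) (by positivity), log_exp]

/-- `x n = log A n` along an orbit of the cluster transformation
`(A₀, A₁) ↦ (A₁, (C + A₁²) / A₀)`. -/
def IsDehnTwistLogOrbit (C : ℝ) (x : ℕ → ℝ) : Prop :=
  ∀ n, x (n + 2) = log (C + exp (2 * x (n + 1))) - x n

namespace IsDehnTwistLogOrbit

variable {C : ℝ} {x : ℕ → ℝ}

theorem sub_succ_succ_eq (h : IsDehnTwistLogOrbit C x) (hC : 0 ≤ C) (n : ℕ) :
    x (n + 2) - x (n + 1) = x (n + 1) - x n + log (1 + C * exp (-(2 * x (n + 1)))) := by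
  rw [h n, log_add_exp_eq hC]
  ring

theorem monotone_sub_succ (h : IsDehnTwistLogOrbit C x) (hC : 0 ≤ C) :
    Monotone fun n => x (n + 1) - x n :=
  monotone_nat_of_le_succ fun n => by
    have hcorr : 0 ≤ log (1 + C * exp (-(2 * x (n + 1)))) :=
      log_nonneg (by simp only [le_add_iff_nonneg_right]; positivity)
    rw [h.sub_succ_succ_eq hC]
    linarith

theorem exists_pos_sub_succ (h : IsDehnTwistLogOrbit C x) (hC : 0 < C) :
    ∃ N, 0 < x (N + 1) - x N := by
  by_contra! hnonpos
  have hanti : Antitone x := antitone_nat_of_succ_le fun n => by linarith [hnonpos n]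
  have hε : 0 < log (1 + C * exp (-(2 * x 0))) :=
    log_pos (by simp only [lt_add_iff_pos_right]; positivity)
  have hgrowth : ∀ n, log (1 + C * exp (-(2 * x 0))) ≤
      (x (n + 1 + 1) - x (n + 1)) - (x (n + 1) - x n) := fun n => by
    have hle : x (n + 1) ≤ x 0 := hanti (Nat.zero_le _)
    rw [h.sub_succ_succ_eq hC.le, add_sub_cancel_left]
    gcongr
  have hinf := tendsto_atTop_of_eventually_le_sub_succ (f := fun n => x (n + 1) - x n) hε
    (Eventually.of_forall hgrowth)
  obtain ⟨n, hn⟩ := (hinf.eventually_gt_atTop 0).exists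
  exact (hnonpos n).not_gt hn

theorem eventually_le_sub_succ (h : IsDehnTwistLogOrbit C x) (hC : 0 < C) :
    ∃ δ > 0, ∀ᶠ n in atTop, δ ≤ x (n + 1) - x n := by
  obtain ⟨N, hN⟩ := h.exists_pos_sub_succ hC
  exact ⟨_, hN, eventually_atTop.mpr ⟨N, fun n hn => h.monotone_sub_succ hC.le hn⟩⟩

theorem exists_tendsto_sub_succ (h : IsDehnTwistLogOrbit C x) (hC : 0 < C) :
    ∃ l, Tendsto (fun n => x (n + 1) - x n) atTop (𝓝 l) := by
  obtain ⟨δ, hδ, hincr⟩ := h.eventually_le_sub_succ hC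
  have hexp : Summable fun n => exp (-(2 * x (n + 1))) := by
    refine summable_exp_neg_of_eventually_le_sub_succ (mul_pos two_pos hδ) ?_
    filter_upwards [(tendsto_add_atTop_nat 1).eventually hincr] with n hn
    linarith
  have hcorr : Summable fun n => log (1 + C * exp (-(2 * x (n + 1)))) := by
    refine (hexp.mul_left C).of_nonneg_of_le (fun n => log_nonneg ?_) fun n => ?_
    · simp only [le_add_iff_nonneg_right]
      positivity
    · linarith [log_le_sub_one_of_pos (show 0 < 1 + C * exp (-(2 * x (n + 1))) by positivity)]
  have hsum : HasSum (fun n => (x (n + 1 + 1) - x (n + 1)) - (x (n + 1) - x n))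
      (∑' n, log (1 + C * exp (-(2 * x (n + 1))))) := by
    simpa only [h.sub_succ_succ_eq hC.le, add_sub_cancel_left] using hcorr.hasSum
  exact ⟨_, tendsto_of_hasSum_sub_succ hsum⟩

end IsDehnTwistLogOrbit

/-- The log-dynamics of a cluster Dehn twist: if `C > 0` and `x` satisfies
`x_{n+2} = log(C + exp(2 x_{n+1})) − x_n`, then `x_n → +∞` and `x_{n+1}/x_n → 1`. -/
theorem cluster_Dehn_twist_log_dynamics (C : ℝ) (hC : 0 < C) (x : ℕ → ℝ)
    (hrec : ∀ n, x (n + 2) = Real.log (C + Real.exp (2 * x (n + 1))) - x n) :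
    Filter.Tendsto x Filter.atTop Filter.atTop ∧
    Filter.Tendsto (fun n => x (n + 1) / x n) Filter.atTop (nhds 1) := by
  have horbit : IsDehnTwistLogOrbit C x := hrec
  obtain ⟨δ, hδ, hincr⟩ := horbit.eventually_le_sub_succ hC
  have hx := tendsto_atTop_of_eventually_le_sub_succ hδ hincr
  obtain ⟨l, hl⟩ := horbit.exists_tendsto_sub_succ hC
  exact ⟨hx, tendsto_succ_div_self_of_tendsto_sub hx hl⟩
end

section
/- Let k ≥ 2 be an integer, let s = √(k² − 4), and let T_k : ℝ² → ℝ² be given by T_k(x₀,x₁) = (x₁ + k·max(0,x₀), −x₀). Then T_k(k−s, −2) = ((k−s)/2)·(k−s, −2), so the projective class of v₋ = (k−s, −2) is a fixed point of the projectivized tropical X-action. Moreover, if k ≥ 3 then k−s > 0 and (k−s) − 2 < 0, so v₋ lies outside the closed cone {(x₀,x₁) : x₀ ≥ 0 and x₀ + x₁ ≥ 0}. -/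
/-- The tropicalized action of the generator of `Γ_{L_k}` on the tropical X-space:
`T_k(x₀,x₁) = (x₁ + k·max(0,x₀), −x₀)`. -/
def TLk (k : ℕ) : ℝ × ℝ → ℝ × ℝ :=
  fun p => (p.2 + (k : ℝ) * max 0 p.1, -p.1)

/-- The vector `v₋ = (k−√(k²−4), −2)` is scaled by `(k−√(k²−4))/2` under `T_k`,
so its projective class is a fixed point of the projectivized tropical X-action.
Moreover for `k ≥ 3` the vector `v₋` lies outside the closed cone
`{x₀ ≥ 0, x₀ + x₁ ≥ 0}`. -/
theorem TLk_repelling_eigenvector (k : ℕ) (hk : 2 ≤ k) :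
    TLk k ((k : ℝ) - Real.sqrt ((k : ℝ) ^ 2 - 4), -2) =
      (((k : ℝ) - Real.sqrt ((k : ℝ) ^ 2 - 4)) / 2) •
        (((k : ℝ) - Real.sqrt ((k : ℝ) ^ 2 - 4), -2) : ℝ × ℝ) ∧
    (3 ≤ k → 0 < (k : ℝ) - Real.sqrt ((k : ℝ) ^ 2 - 4) ∧
      ((k : ℝ) - Real.sqrt ((k : ℝ) ^ 2 - 4)) - 2 < 0) := by
  have hk2 : (2 : ℝ) ≤ (k : ℝ) := by exact_mod_cast hk
  have hnn : (0 : ℝ) ≤ (k : ℝ) ^ 2 - 4 := by nlinarith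
  set s := Real.sqrt ((k : ℝ) ^ 2 - 4) with hs
  have hsnn : 0 ≤ s := Real.sqrt_nonneg _
  have hssq : s ^ 2 = (k : ℝ) ^ 2 - 4 := Real.sq_sqrt hnn
  have hsle : s ≤ (k : ℝ) := by nlinarith
  constructor
  · have hmax : max 0 ((k : ℝ) - s) = (k : ℝ) - s := max_eq_right (by linarith)
    simp only [TLk, Prod.smul_mk, smul_eq_mul, hmax, Prod.mk.injEq]
    constructor <;> nlinarith
  · intro hk3
    have hk3' : (3 : ℝ) ≤ (k : ℝ) := by exact_mod_cast hk3
    have hslt : s < (k : ℝ) := by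
      rcases lt_or_eq_of_le hsle with h | h
      · exact h
      · exfalso; nlinarith
    refine ⟨by linarith, ?_⟩
    have : (k : ℝ) - 2 < s := by
      nlinarith [Real.sq_sqrt hnn, Real.sqrt_nonneg ((k : ℝ) ^ 2 - 4)]
    linarith
end

section
/- Let k ≥ 2 be an integer, let s = √(k² − 4), let T_k : ℝ² → ℝ² be given by T_k(x₀,x₁) = (x₁ + k·max(0,x₀), −x₀), and let v₊ = (k+s, −2). Then for every (x₀,x₁) ∈ ℝ² ∖ {(0,0)} that is not a real scalar multiple of (k−s, −2), the normalized iterates T_k^n(x₀,x₁)/‖T_k^n(x₀,x₁)‖ converge, as n → ∞, to v₊/‖v₊‖ (Euclidean norm on ℝ²). -/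
/-- The Euclidean norm on `ℝ²`. -/
noncomputable def eucNorm : ℝ × ℝ → ℝ := fun p => Real.sqrt (p.1 ^ 2 + p.2 ^ 2)

/- ## Auxiliary definitions -/

/-- `√(k²−4)`. -/
noncomputable def sk (k : ℕ) : ℝ := Real.sqrt ((k:ℝ)^2 - 4)

/-- The linear map agreeing with `TLk k` on `{x₀ ≥ 0}`. -/
def Ak (k : ℕ) : ℝ × ℝ → ℝ × ℝ := fun p => (p.2 + (k:ℝ) * p.1, -p.1)

/-- Eigen-covector for the eigenvalue `(k+s)/2`. -/
noncomputable def ell (k : ℕ) (p : ℝ × ℝ) : ℝ := 2*p.1 + ((k:ℝ) - sk k)*p.2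

/-- Eigen-covector for the eigenvalue `(k−s)/2`. -/
noncomputable def mm (k : ℕ) (p : ℝ × ℝ) : ℝ := 2*p.1 + ((k:ℝ) + sk k)*p.2

/- ## Basic facts about `sk` -/

lemma sk_nonneg (k : ℕ) : 0 ≤ sk k := Real.sqrt_nonneg _

lemma kcast {k : ℕ} (hk : 2 ≤ k) : (2:ℝ) ≤ (k:ℝ) := by exact_mod_cast hk

lemma sk_sq {k : ℕ} (hk : 2 ≤ k) : sk k ^ 2 = (k:ℝ)^2 - 4 := by
  have h := kcast hk
  rw [sk, Real.sq_sqrt]; nlinarith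

lemma sk_lt {k : ℕ} (hk : 2 ≤ k) : sk k < (k:ℝ) := by
  have h := kcast hk
  nlinarith [sk_nonneg k, sk_sq hk]

lemma ks_le {k : ℕ} (hk : 2 ≤ k) : (k:ℝ) * sk k ≤ (k:ℝ)^2 - 2 := by
  have h := kcast hk
  nlinarith [sk_nonneg k, sk_sq hk, sq_nonneg ((k:ℝ) * sk k - ((k:ℝ)^2 - 2))]

lemma sk_le_two {k : ℕ} (hk : 2 ≤ k) : (k:ℝ) - sk k ≤ 2 := by
  have h := kcast hk
  nlinarith [sk_nonneg k, sk_sq hk]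

/- ## The linear map and the eigen-covectors -/

lemma TLk_eq_Ak {k : ℕ} {x : ℝ × ℝ} (hx : 0 ≤ x.1) : TLk k x = Ak k x := by
  simp [TLk, Ak, max_eq_right hx]

lemma ell_Ak {k : ℕ} (hk : 2 ≤ k) (x : ℝ × ℝ) :
    ell k (Ak k x) = (((k:ℝ) + sk k)/2) * ell k x := by
  have h := sk_sq hk
  simp only [ell, Ak]
  linear_combination (x.2/2) * h

lemma mm_Ak {k : ℕ} (hk : 2 ≤ k) (x : ℝ × ℝ) :
    mm k (Ak k x) = (((k:ℝ) - sk k)/2) * mm k x := by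
  have h := sk_sq hk
  simp only [mm, Ak]
  linear_combination (x.2/2) * h

lemma Ak_fst_nonneg {k : ℕ} (hk : 2 ≤ k) {x : ℝ × ℝ} (hx : 0 ≤ x.1)
    (hl : 0 ≤ ell k x) : 0 ≤ (Ak k x).1 := by
  have h1 := ks_le hk
  have h2 := sk_lt hk
  simp only [ell] at hl
  simp only [Ak]
  nlinarith

lemma ell_iter {k : ℕ} (hk : 2 ≤ k) (x : ℝ × ℝ) :
    ∀ n, ell k ((Ak k)^[n] x) = (((k:ℝ) + sk k)/2)^n * ell k x := by
  intro n
  induction n with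
  | zero => simp
  | succ n ih =>
    rw [Function.iterate_succ_apply', ell_Ak hk, ih, pow_succ]; ring

lemma A2_iter (x : ℝ × ℝ) :
    ∀ n : ℕ, (Ak 2)^[n] x = (x.1 + n*(x.1+x.2), x.2 - n*(x.1+x.2)) := by
  intro n
  induction n with
  | zero => simp
  | succ n ih =>
    rw [Function.iterate_succ_apply', ih]
    simp only [Ak, Prod.mk.injEq]
    push_cast
    constructor <;> ring

lemma decomp_iter {k : ℕ} (hk : 2 ≤ k) (hs : 0 < sk k) (x : ℝ × ℝ) :
    ∀ n : ℕ, (Ak k)^[n] x =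
      ((((k:ℝ) + sk k)/2)^n * (ell k x / (4 * sk k))) • (((k:ℝ) + sk k, -2) : ℝ × ℝ)
      + ((((k:ℝ) - sk k)/2)^n * (-(mm k x) / (4 * sk k))) • (((k:ℝ) - sk k, -2) : ℝ × ℝ) := by
  intro n
  have h := sk_sq hk
  have hs' : sk k ≠ 0 := ne_of_gt hs
  induction n with
  | zero =>
    simp only [Function.iterate_zero, id_eq, pow_zero, one_mul, ell, mm, Prod.smul_mk,
      smul_eq_mul, Prod.mk_add_mk]
    have hx : x = (x.1, x.2) := rfl
    rw [hx]
    simp only [Prod.mk.injEq]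
    constructor <;> (field_simp; ring_nf)
  | succ n ih =>
    rw [Function.iterate_succ_apply', ih]
    simp only [Ak, Prod.smul_mk, smul_eq_mul, Prod.mk_add_mk, Prod.mk.injEq, pow_succ]
    constructor
    · linear_combination (-((((k:ℝ) + sk k)/2)^n * (ell k x / (4 * sk k))
        + (((k:ℝ) - sk k)/2)^n * (-(mm k x) / (4 * sk k)))/2) * h
    · ring

/- ## Normalization machinery -/

lemma eucNorm_cont : Continuous eucNorm := by
  unfold eucNorm; fun_prop

lemma eucNorm_smul {c : ℝ} (hc : 0 ≤ c) (x : ℝ × ℝ) :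
    eucNorm (c • x) = c * eucNorm x := by
  simp only [eucNorm, Prod.smul_fst, Prod.smul_snd, smul_eq_mul]
  rw [show (c*x.1)^2 + (c*x.2)^2 = c^2 * (x.1^2+x.2^2) by ring,
    Real.sqrt_mul (sq_nonneg c), Real.sqrt_sq hc]

lemma eucNorm_pos {x : ℝ × ℝ} (hx : x ≠ 0) : 0 < eucNorm x := by
  apply Real.sqrt_pos.mpr
  have h : ¬(x.1 = 0 ∧ x.2 = 0) := by
    intro ⟨h1, h2⟩; exact hx (Prod.ext h1 h2)
  rcases not_and_or.mp h with h1 | h1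
  · nlinarith [sq_nonneg x.2, (pow_pos (abs_pos.mpr h1) 2 : 0 < |x.1|^2), sq_abs x.1]
  · nlinarith [sq_nonneg x.1, (pow_pos (abs_pos.mpr h1) 2 : 0 < |x.2|^2), sq_abs x.2]

lemma normalize_smul {c : ℝ} (hc : 0 < c) (x : ℝ × ℝ) :
    (eucNorm (c • x))⁻¹ • (c • x) = (eucNorm x)⁻¹ • x := by
  rw [eucNorm_smul hc.le, smul_smul, mul_inv, mul_comm c⁻¹ (eucNorm x)⁻¹,
    mul_assoc, inv_mul_cancel₀ hc.ne', mul_one]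

lemma norm_lim (u : ℕ → ℝ × ℝ) (r : ℕ → ℝ) (hr : ∀ᶠ n in Filter.atTop, 0 < r n)
    (w : ℝ × ℝ) (hw : w ≠ 0)
    (h : Filter.Tendsto (fun n => r n • u n) Filter.atTop (nhds w)) :
    Filter.Tendsto (fun n => (eucNorm (u n))⁻¹ • u n) Filter.atTop
      (nhds ((eucNorm w)⁻¹ • w)) := by
  have hcont : ContinuousAt (fun x : ℝ × ℝ => (eucNorm x)⁻¹ • x) w :=
    ((eucNorm_cont.continuousAt).inv₀ (ne_of_gt (eucNorm_pos hw))).smul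
      continuousAt_id
  have h2 := hcont.tendsto.comp h
  refine h2.congr' ?_
  filter_upwards [hr] with n hn
  exact normalize_smul hn (u n)

/- ## Orbit lemmas -/

lemma iter_in_C {k : ℕ} (hk : 2 ≤ k) {x : ℝ × ℝ} (hx : 0 ≤ x.1) (hl : 0 ≤ ell k x) :
    ∀ n, (TLk k)^[n] x = (Ak k)^[n] x ∧ 0 ≤ ((Ak k)^[n] x).1
      ∧ 0 ≤ ell k ((Ak k)^[n] x) := by
  intro n
  induction n with
  | zero => exact ⟨rfl, hx, hl⟩
  | succ n ih =>
    obtain ⟨h1, h2, h3⟩ := ih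
    refine ⟨?_, ?_, ?_⟩
    · rw [Function.iterate_succ_apply', Function.iterate_succ_apply', h1,
        TLk_eq_Ak h2]
    · rw [Function.iterate_succ_apply']
      exact Ak_fst_nonneg hk h2 h3
    · rw [Function.iterate_succ_apply', ell_Ak hk]
      have : (0:ℝ) ≤ ((k:ℝ) + sk k)/2 := by
        have := kcast hk; have := sk_nonneg k; linarith
      positivity

lemma escape {k : ℕ} (hk : 2 ≤ k) {p : ℝ × ℝ} (hl : ell k p < 0) :
    ∃ n, ((TLk k)^[n] p).1 < 0 := by
  by_contra H
  push_neg at H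
  have hiter : ∀ n, (TLk k)^[n] p = (Ak k)^[n] p := by
    intro n
    induction n with
    | zero => rfl
    | succ n ih =>
      rw [Function.iterate_succ_apply', Function.iterate_succ_apply', ← ih,
        TLk_eq_Ak (H n), ih]
  set u : ℕ → ℝ := fun n => ((Ak k)^[n] p).1 with hu
  have hun : ∀ n, 0 ≤ u n := fun n => by rw [hu]; simp only [← hiter n]; exact H n
  have hlam : (1:ℝ) ≤ ((k:ℝ) + sk k)/2 := by
    have := kcast hk; have := sk_nonneg k; linarith
  have hrel : ∀ n, u (n+1) ≤ u n + ell k p / 2 := by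
    intro n
    have he := ell_iter hk p (n+1)
    have hsnd : ((Ak k)^[n+1] p).2 = -u n := by
      rw [Function.iterate_succ_apply']; rfl
    have hfst : ((Ak k)^[n+1] p).1 = u (n+1) := rfl
    have hexp : ell k ((Ak k)^[n+1] p)
        = 2 * u (n+1) + ((k:ℝ) - sk k) * (-(u n)) := by
      rw [ell, hfst, hsnd]
    have hpow : (1:ℝ) ≤ (((k:ℝ) + sk k)/2)^(n+1) := one_le_pow₀ hlam
    have h1 : (((k:ℝ) + sk k)/2)^(n+1) * ell k p ≤ ell k p := by
      nlinarith
    have h2 : ((k:ℝ) - sk k) * u n ≤ 2 * u n := by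
      have := sk_le_two hk
      nlinarith [hun n]
    nlinarith [hexp ▸ he]
  have hbound : ∀ n, u n ≤ u 0 + n * (ell k p / 2) := by
    intro n
    induction n with
    | zero => simp
    | succ n ih =>
      have := hrel n
      push_cast
      nlinarith
  obtain ⟨n, hn⟩ := exists_nat_gt (u 0 / (-(ell k p / 2)))
  have h2 : -(ell k p / 2) > 0 := by linarith
  have : u 0 + n * (ell k p / 2) < 0 := by
    have := (div_lt_iff₀ h2).mp hn
    nlinarith
  nlinarith [hun n, hbound n]

lemma from_neg {k : ℕ} (hk : 2 ≤ k) {x : ℝ × ℝ} (hx : x.1 < 0) :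
    ∃ N, 0 ≤ ((TLk k)^[N] x).1 ∧ 0 < ell k ((TLk k)^[N] x) := by
  have hkm : 0 < (k:ℝ) - sk k := by have := sk_lt hk; linarith
  have hT : TLk k x = (x.2, -x.1) := by
    simp [TLk, max_eq_left hx.le]
  by_cases h2 : 0 ≤ x.2
  · refine ⟨1, ?_, ?_⟩
    · rw [Function.iterate_one, hT]; exact h2
    · rw [Function.iterate_one, hT, ell]; simp only
      nlinarith
  · push_neg at h2
    have hT2 : (TLk k)^[2] x = (-x.1, -x.2) := by
      rw [show ((TLk k)^[2] x) = TLk k (TLk k x) from rfl, hT]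
      simp [TLk, max_eq_left h2.le]
    refine ⟨2, ?_, ?_⟩
    · rw [hT2]; simp only; linarith
    · rw [hT2, ell]; simp only; nlinarith

lemma entry {k : ℕ} (hk : 2 ≤ k) (p : ℝ × ℝ)
    (hp' : ∀ c : ℝ, p ≠ c • (((k : ℝ) - sk k, -2) : ℝ × ℝ)) :
    ∃ N, 0 ≤ ((TLk k)^[N] p).1 ∧ 0 < ell k ((TLk k)^[N] p) := by
  by_cases hl0 : ell k p = 0
  · exfalso
    apply hp' (-(p.2)/2)
    have h1 : p.1 = (-(p.2)/2) * ((k:ℝ) - sk k) := by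
      rw [ell] at hl0; linarith
    have h2 : p.2 = (-(p.2)/2) * (-2) := by ring
    exact Prod.ext h1 h2
  rcases lt_or_ge p.1 0 with hneg | hpos
  · exact from_neg hk hneg
  · rcases lt_or_gt_of_ne hl0 with hl | hl
    · obtain ⟨n, hn⟩ := escape hk hl
      obtain ⟨N, hN1, hN2⟩ := from_neg hk hn
      refine ⟨N + n, ?_, ?_⟩
      · rw [Function.iterate_add_apply]; exact hN1
      · rw [Function.iterate_add_apply]; exact hN2
    · exact ⟨0, hpos, hl⟩

/- ## Main theorem -/

/-- For every nonzero point of `ℝ²` off the repelling ray spanned by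
`(k−√(k²−4), −2)`, the normalized forward `T_k`-iterates converge to the
normalized attracting eigenvector `v₊/‖v₊‖`, `v₊ = (k+√(k²−4), −2)`. -/
theorem TLk_forward_convergence (k : ℕ) (hk : 2 ≤ k) (p : ℝ × ℝ) (hp : p ≠ 0)
    (hp' : ∀ c : ℝ, p ≠ c • (((k : ℝ) - Real.sqrt ((k : ℝ) ^ 2 - 4), -2) : ℝ × ℝ)) :
    Filter.Tendsto
      (fun n => (eucNorm ((TLk k)^[n] p))⁻¹ • (TLk k)^[n] p)
      Filter.atTop
      (nhds ((eucNorm (((k : ℝ) + Real.sqrt ((k : ℝ) ^ 2 - 4), -2) : ℝ × ℝ))⁻¹ •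
        (((k : ℝ) + Real.sqrt ((k : ℝ) ^ 2 - 4), -2) : ℝ × ℝ))) := by
  have hsk : Real.sqrt ((k:ℝ) ^ 2 - 4) = sk k := rfl
  rw [hsk] at hp' ⊢
  obtain ⟨N, hq1, hq2⟩ := entry hk p hp'
  set q := (TLk k)^[N] p with hqdef
  rw [← Filter.tendsto_add_atTop_iff_nat N]
  have hiter : ∀ n, (TLk k)^[n + N] p = (Ak k)^[n] q := by
    intro n
    rw [Function.iterate_add_apply]
    exact (iter_in_C hk hq1 hq2.le n).1
  simp only [hiter]
  rcases eq_or_lt_of_le hk with hk2 | hk3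
  · -- k = 2 (parabolic case)
    subst hk2
    have hs0 : sk 2 = 0 := by
      rw [sk, show ((2:ℕ):ℝ)^2 - 4 = 0 by norm_num, Real.sqrt_zero]
    have hsig : 0 < q.1 + q.2 := by
      rw [ell, hs0] at hq2; push_cast at hq2; linarith
    set σ : ℝ := q.1 + q.2 with hσ
    have hr : ∀ᶠ n : ℕ in Filter.atTop, 0 < ((n:ℝ)⁻¹) := by
      filter_upwards [Filter.eventually_ge_atTop 1] with n hn
      have : (0:ℝ) < n := by exact_mod_cast hn
      positivity
    have hw : ((σ, -σ) : ℝ × ℝ) ≠ 0 := by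
      intro hcon
      rw [Prod.mk_eq_zero] at hcon
      linarith [hcon.1]
    have hlim : Filter.Tendsto (fun n : ℕ => ((n:ℝ)⁻¹ • (Ak 2)^[n] q))
        Filter.atTop (nhds ((σ, -σ) : ℝ × ℝ)) := by
      have l1 : Filter.Tendsto (fun n : ℕ => ((n:ℝ)⁻¹ * q.1 + σ, (n:ℝ)⁻¹ * q.2 - σ))
          Filter.atTop (nhds ((0 * q.1 + σ, 0 * q.2 - σ) : ℝ × ℝ)) := by
        apply Filter.Tendsto.prodMk_nhds
        · exact (tendsto_inv_atTop_nhds_zero_nat.mul_const q.1).add_const σ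
        · exact (tendsto_inv_atTop_nhds_zero_nat.mul_const q.2).sub_const σ
      have heq : ((0 * q.1 + σ, 0 * q.2 - σ) : ℝ × ℝ) = (σ, -σ) := by
        norm_num
      rw [heq] at l1
      refine l1.congr' ?_
      filter_upwards [Filter.eventually_ge_atTop 1] with n hn
      have hn' : ((n:ℝ)) ≠ 0 := by
        have : (0:ℝ) < n := by exact_mod_cast hn
        exact ne_of_gt this
      rw [A2_iter q n]
      simp only [Prod.smul_mk, smul_eq_mul, Prod.mk.injEq]
      constructor <;> (field_simp; try ring)
    have main := norm_lim (fun n => (Ak 2)^[n] q) (fun n => (n:ℝ)⁻¹) hr _ hw hlim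
    have hwv : ((σ, -σ) : ℝ × ℝ) = (σ/2) • ((((2:ℕ):ℝ) + sk 2, -2) : ℝ × ℝ) := by
      rw [hs0]
      simp only [Prod.smul_mk, smul_eq_mul, Prod.mk.injEq]
      push_cast
      constructor <;> ring
    rw [hwv, normalize_smul (by linarith : (0:ℝ) < σ/2)] at main
    exact main
  · -- k ≥ 3 (hyperbolic case)
    have hK3 : (3:ℝ) ≤ (k:ℝ) := by exact_mod_cast hk3
    have hs : 0 < sk k := Real.sqrt_pos.mpr (by nlinarith)
    have hkp : (0:ℝ) < (k:ℝ) + sk k := by linarith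
    have hkm : (0:ℝ) < (k:ℝ) - sk k := by have := sk_lt hk; linarith
    have hlp : (0:ℝ) < ((k:ℝ) + sk k)/2 := by linarith
    set a : ℝ := ell k q / (4 * sk k) with ha_def
    set b : ℝ := -(mm k q) / (4 * sk k) with hb_def
    have ha : 0 < a := div_pos hq2 (by positivity)
    set ρ : ℝ := ((k:ℝ) - sk k)/((k:ℝ) + sk k) with hρ_def
    have hρ0 : 0 ≤ ρ := le_of_lt (div_pos hkm hkp)
    have hρ1 : ρ < 1 := by
      rw [div_lt_one hkp]; linarith
    have key : ∀ n : ℕ, ((((k:ℝ) + sk k)/2)^n)⁻¹ • ((Ak k)^[n] q)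
        = a • ((((k:ℝ) + sk k), -2) : ℝ × ℝ) + (ρ^n * b) • ((((k:ℝ) - sk k), -2) : ℝ × ℝ) := by
      intro n
      have hpne : ((((k:ℝ) + sk k)/2)^n) ≠ 0 := pow_ne_zero _ (ne_of_gt hlp)
      have hkpne : ((k:ℝ) + sk k) ≠ 0 := ne_of_gt hkp
      rw [decomp_iter hk hs q n, smul_add, smul_smul, smul_smul, ← ha_def, ← hb_def]
      congr 1
      · congr 1
        rw [← mul_assoc, inv_mul_cancel₀ hpne, one_mul]
      · congr 1
        rw [hρ_def, div_pow, div_pow, div_pow]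
        field_simp
    have hten : Filter.Tendsto (fun n : ℕ => ((((k:ℝ) + sk k)/2)^n)⁻¹ • ((Ak k)^[n] q))
        Filter.atTop (nhds (a • ((((k:ℝ) + sk k), -2) : ℝ × ℝ))) := by
      have h0 : Filter.Tendsto (fun n : ℕ => ρ^n) Filter.atTop (nhds 0) :=
        tendsto_pow_atTop_nhds_zero_of_lt_one hρ0 hρ1
      have h1 := (h0.mul_const b).smul_const ((((k:ℝ) - sk k), -2) : ℝ × ℝ)
      have h2 := (tendsto_const_nhds (x := a • ((((k:ℝ) + sk k), -2) : ℝ × ℝ))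
        (f := Filter.atTop (α := ℕ))).add h1
      simp only [zero_mul, zero_smul, add_zero] at h2
      exact (Filter.Tendsto.congr (fun n => (key n).symm) h2)
    have hw : a • ((((k:ℝ) + sk k), -2) : ℝ × ℝ) ≠ 0 := by
      intro hcon
      rw [Prod.ext_iff] at hcon
      simp only [Prod.smul_mk, smul_eq_mul] at hcon
      have := hcon.2
      norm_num at this
      linarith [this, ha]
    have hr : ∀ᶠ n : ℕ in Filter.atTop, 0 < (((((k:ℝ) + sk k)/2)^n)⁻¹) :=
      Filter.Eventually.of_forall (fun n => by positivity)
    have main := norm_lim (fun n => (Ak k)^[n] q)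
      (fun n => ((((k:ℝ) + sk k)/2)^n)⁻¹) hr _ hw hten
    rw [normalize_smul ha] at main
    exact main
end

section
/- Let k ≥ 2 be an integer and let T_k : ℝ² → ℝ² be given by T_k(x₀,x₁) = (x₁ + k·max(0,x₀), −x₀). If x₀ > 0 and x₁ ≥ 0, then for every m ≥ 1 the second coordinate of T_k^m(x₀,x₁) is strictly negative; in particular no iterate T_k^m(x₀,x₁) with m ≥ 1 has both coordinates non-negative. -/
lemma TLk_invariant (k : ℕ) (hk : 2 ≤ k) (p : ℝ × ℝ)
    (h₀ : 0 < p.1) (h₁ : 0 ≤ p.2) :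
    ∀ m : ℕ, 0 < ((TLk k)^[m] p).1 ∧ 0 ≤ ((TLk k)^[m] p).1 + ((TLk k)^[m] p).2 := by
  intro m
  induction m with
  | zero => exact ⟨h₀, by simpa using add_nonneg h₀.le h₁⟩
  | succ n ih =>
    obtain ⟨ha, hab⟩ := ih
    set q := (TLk k)^[n] p with hq
    rw [Function.iterate_succ_apply', ← hq]
    have hmax : max 0 q.1 = q.1 := max_eq_right ha.le
    have hk2 : (2 : ℝ) ≤ (k : ℝ) := by exact_mod_cast hk
    constructor
    · show 0 < q.2 + (k : ℝ) * max 0 q.1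
      rw [hmax]; nlinarith
    · show 0 ≤ q.2 + (k : ℝ) * max 0 q.1 + -q.1
      rw [hmax]; nlinarith

/-- If `x₀ > 0` and `x₁ ≥ 0`, then for every `m ≥ 1` the second coordinate of
`T_k^m(x₀,x₁)` is strictly negative; in particular no such iterate has both
coordinates non-negative. -/
theorem TLk_no_other_nonneg_chart (k : ℕ) (hk : 2 ≤ k) (p : ℝ × ℝ)
    (h₀ : 0 < p.1) (h₁ : 0 ≤ p.2) :
    ∀ m : ℕ, 1 ≤ m → ((TLk k)^[m] p).2 < 0 ∧
      ¬(0 ≤ ((TLk k)^[m] p).1 ∧ 0 ≤ ((TLk k)^[m] p).2) := by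
  intro m hm
  obtain ⟨n, rfl⟩ := Nat.exists_eq_add_of_le hm
  have h := (TLk_invariant k hk p h₀ h₁ n).1
  rw [add_comm, Function.iterate_succ_apply']
  have : ((TLk k) ((TLk k)^[n] p)).2 = -((TLk k)^[n] p).1 := rfl
  rw [this]
  constructor
  · linarith
  · rintro ⟨-, h2⟩; linarith
end

section
/- Let k ≥ 2 be an integer and define S_k : ℝ² → ℝ² by S_k(x₀,x₁) = (−x₁, x₀ + k·min(0,x₁)). If (x₀,x₁) satisfies x₁ < 0 and x₀ + x₁ < 0, then for every m ≥ 0 the iterate S_k^m(x₀,x₁) again satisfies these two inequalities, and S_k^m(x₀,x₁) = N^m(x₀,x₁), where N : ℝ² → ℝ² is the linear map with matrix [[0,−1],[1,k]]. -/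
/-- The tropicalized action of the inverse of the generator of `Γ_{L_k}` on the
tropical X-space: `S_k(x₀,x₁) = (−x₁, x₀ + k·min(0,x₁))`. -/
def SLk (k : ℕ) : ℝ × ℝ → ℝ × ℝ :=
  fun p => (-p.2, p.1 + (k : ℝ) * min 0 p.2)

/-- The linear map with matrix `[[0,−1],[1,k]]`. -/
def NLk (k : ℕ) : ℝ × ℝ → ℝ × ℝ :=
  fun p => (-p.2, p.1 + (k : ℝ) * p.2)

/-- On the cone `{x₁ < 0, x₀ + x₁ < 0}`, the piecewise-linear map `S_k` preserves
the cone and coincides with the linear map `N = [[0,−1],[1,k]]` on all iterates. -/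
theorem SLk_cone_invariant_and_linear (k : ℕ) (hk : 2 ≤ k) (p : ℝ × ℝ)
    (h₁ : p.2 < 0) (h₂ : p.1 + p.2 < 0) :
    ∀ m : ℕ, (((SLk k)^[m] p).2 < 0 ∧ ((SLk k)^[m] p).1 + ((SLk k)^[m] p).2 < 0) ∧
      (SLk k)^[m] p = (NLk k)^[m] p := by
  have hkr : (2 : ℝ) ≤ (k : ℝ) := by exact_mod_cast hk
  intro m
  induction m with
  | zero => exact ⟨⟨h₁, h₂⟩, rfl⟩
  | succ n ih =>
    obtain ⟨⟨hq1, hq2⟩, heq⟩ := ih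
    set q := (SLk k)^[n] p with hq
    have hmin : min 0 q.2 = q.2 := min_eq_right hq1.le
    have hS : SLk k q = (-q.2, q.1 + (k:ℝ) * q.2) := by
      simp [SLk, hmin]
    rw [Function.iterate_succ_apply', Function.iterate_succ_apply', ← hq, ← heq, hS]
    refine ⟨⟨?_, ?_⟩, rfl⟩
    · simp only
      nlinarith
    · simp only
      nlinarith
end
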